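/- Let α > 0, b > 0, let X₁ be Bernoulli(p) with 0 ≤ p ≤ 1 and X₂ uniform on (0,b) independent of X₁, set Z = αX₁ + X₂, and let F be the cumulative distribution function of X₂, i.e. F(x) = min(max(x/b, 0), 1). Then Var( F(Z) − F(Z−α) ) = (α/b)³ (1/3 − α/(4b)) if α ≤ b, and Var( F(Z) − F(Z−α) ) = 1/12 if α > b. -/

import Mathlib

/-!
On `{X₁ = 0}` the increment `F(Z) - F(Z - α)` equals `min(X₂, α ∧ b) / b`, and on `{X₁ = 1}` it
equals `min(b - X₂, α ∧ b) / b`. As `b - X₂` is again uniform on `(0, b)` and `X₂` is independent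
of `X₁`, the increment has the law of `min(U, α ∧ b) / b` with `U` uniform on `(0, b)`, whatever
`p` is. Its variance is the elementary integral `t³ (1/3 - t/4)` with `t = (α ∧ b) / b`.
-/

open MeasureTheory ProbabilityTheory Real Set

noncomputable def uniformCDF (b x : ℝ) : ℝ := min (max (x / b) 0) 1

@[fun_prop]
lemma continuous_uniformCDF (b : ℝ) : Continuous (uniformCDF b) := by
  unfold uniformCDF; fun_prop

lemma uniformCDF_sub_uniformCDF_sub {α b x : ℝ} (hα : 0 < α) (hb : 0 < b) (hx : x ∈ Icc 0 b) :
    uniformCDF b x - uniformCDF b (x - α) = min x (min α b) / b := by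
  obtain ⟨hx0, hxb⟩ := hx
  have hxb' : x / b ≤ 1 := (div_le_one hb).2 hxb
  have hxα : (x - α) / b ≤ 1 := (div_le_one hb).2 (by linarith)
  unfold uniformCDF
  rw [max_eq_left (div_nonneg hx0 hb.le), min_eq_left hxb',
    min_eq_left (max_le hxα zero_le_one)]
  rcases le_total x α with h | h
  · rw [max_eq_right (div_nonpos_of_nonpos_of_nonneg (by linarith) hb.le),
      min_eq_left (le_min h hxb)]
    ring
  · rw [max_eq_left (div_nonneg (by linarith) hb.le), min_eq_left (h.trans hxb), min_eq_right h]
    ring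

lemma uniformCDF_eq_one_sub {b : ℝ} (hb : b ≠ 0) (y : ℝ) :
    uniformCDF b y = 1 - uniformCDF b (b - y) := by
  unfold uniformCDF
  rw [sub_div, div_self hb]
  rcases le_total (y / b) 0 with h | h
  · rw [max_eq_right h, max_eq_left (by linarith : 0 ≤ 1 - y / b),
      min_eq_right (by linarith : (1 : ℝ) ≤ 1 - y / b)]
    simp
  rcases le_total (y / b) 1 with h' | h'
  · rw [max_eq_left h, max_eq_left (by linarith), min_eq_left h', min_eq_left (by linarith)]
    ring
  · rw [max_eq_left h, max_eq_right (by linarith : 1 - y / b ≤ 0), min_eq_right h']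
    simp

lemma uniformCDF_add_sub_uniformCDF {α b x : ℝ} (hα : 0 < α) (hb : 0 < b) (hx : x ∈ Icc 0 b) :
    uniformCDF b (α + x) - uniformCDF b x = min (b - x) (min α b) / b := by
  have hx' : b - x ∈ Icc 0 b := ⟨by linarith [hx.2], by linarith [hx.1]⟩
  rw [uniformCDF_eq_one_sub hb.ne' (α + x), uniformCDF_eq_one_sub hb.ne' x,
    ← uniformCDF_sub_uniformCDF_sub hα hb hx']
  ring_nf

lemma integral_min_pow {a b : ℝ} (ha : 0 ≤ a) (hab : a ≤ b) (n : ℕ) :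
    ∫ x in 0..b, min x a ^ n = a ^ (n + 1) / (n + 1) + (b - a) * a ^ n := by
  have hcont : Continuous fun x : ℝ => min x a ^ n := by fun_prop
  rw [← intervalIntegral.integral_add_adjacent_intervals (b := a)
      (hcont.intervalIntegrable _ _) (hcont.intervalIntegrable _ _)]
  have hleft : ∫ x in 0..a, min x a ^ n = ∫ x in 0..a, x ^ n :=
    intervalIntegral.integral_congr fun x hx => by
      rw [uIcc_of_le ha] at hx; rw [min_eq_left hx.2]
  have hright : ∫ x in a..b, min x a ^ n = ∫ _ in a..b, a ^ n :=
    intervalIntegral.integral_congr fun x hx => by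
      rw [uIcc_of_le hab] at hx; rw [min_eq_right hx.1]
  rw [hleft, hright, integral_pow, intervalIntegral.integral_const, smul_eq_mul]
  simp

lemma integral_cond_Ioo {b : ℝ} (hb : 0 ≤ b) (f : ℝ → ℝ) :
    ∫ x, f x ∂volume[|Ioo 0 b] = b⁻¹ * ∫ x in 0..b, f x := by
  rw [ProbabilityTheory.cond, integral_smul_measure, Real.volume_Ioo, sub_zero,
    ENNReal.toReal_inv, ENNReal.toReal_ofReal hb, intervalIntegral.integral_of_le hb,
    integral_Ioc_eq_integral_Ioo, smul_eq_mul]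

lemma map_const_sub_cond_Ioo (b : ℝ) :
    (volume[|Ioo 0 b]).map (fun x => b - x) = volume[|Ioo 0 b] := by
  have h := (Measure.measurePreserving_sub_left volume b).restrict_preimage
    (measurableSet_Ioo (a := (0:ℝ)) (b := b))
  rw [preimage_const_sub_Ioo, sub_self, sub_zero] at h
  rw [ProbabilityTheory.cond, Measure.map_smul, h.map_eq]

lemma MeasureTheory.Measure.map_prod_eq_of_ae_map_eq {α β γ : Type*} [MeasurableSpace α]
    [MeasurableSpace β] [MeasurableSpace γ] {ν₁ : Measure α} {ν₂ : Measure β}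
    [IsProbabilityMeasure ν₁] [SFinite ν₂]
    {ρ : Measure γ} {G : α × β → γ} (hG : Measurable G)
    (h : ∀ᵐ c ∂ν₁, ν₂.map (fun x => G (c, x)) = ρ) :
    (ν₁.prod ν₂).map G = ρ := by
  ext s hs
  rw [Measure.map_apply hG hs, Measure.prod_apply (hG hs)]
  calc ∫⁻ c, ν₂ (Prod.mk c ⁻¹' (G ⁻¹' s)) ∂ν₁ = ∫⁻ _, ρ s ∂ν₁ := by
        refine lintegral_congr_ae (h.mono fun c hc => ?_)
        rw [← hc, Measure.map_apply (by fun_prop) hs]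
        rfl
    _ = ρ s := by simp

lemma variance_min_div_cond_Ioo {a b : ℝ} (ha : 0 ≤ a) (hab : a ≤ b) (hb : 0 < b) :
    Var[fun x => min x a / b; volume[|Ioo 0 b]] = (a / b) ^ 3 * (1 / 3 - a / (4 * b)) := by
  have : IsProbabilityMeasure (volume[|Ioo (0 : ℝ) b]) :=
    cond_isProbabilityMeasure_of_finite (by simp [hb]) (by simp)
  have hbound : ∀ᵐ x ∂volume[|Ioo 0 b], ‖min x a / b‖ ≤ a / b :=
    (ae_cond_mem measurableSet_Ioo).mono fun x hx => by
      rw [Real.norm_eq_abs, abs_of_nonneg (div_nonneg (le_min hx.1.le ha) hb.le)]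
      gcongr
      exact min_le_right _ _
  have hmem : MemLp (fun x => min x a / b) 2 (volume[|Ioo 0 b]) :=
    MemLp.of_bound (by fun_prop) _ hbound
  have hmean : ∫ x, min x a / b ∂volume[|Ioo 0 b] = (a * b - a ^ 2 / 2) / b ^ 2 := by
    rw [integral_cond_Ioo hb.le, intervalIntegral.integral_div]
    have h := integral_min_pow ha hab 1
    simp only [pow_one] at h
    rw [h]
    field_simp
    ring
  have hsq : ∫ x, (min x a / b) ^ 2 ∂volume[|Ioo 0 b] = (a ^ 2 * b - 2 * a ^ 3 / 3) / b ^ 3 := by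
    simp_rw [div_pow]
    rw [integral_cond_Ioo hb.le, intervalIntegral.integral_div, integral_min_pow ha hab 2]
    field_simp
    ring
  rw [variance_eq_sub hmem]
  simp only [Pi.pow_apply]
  rw [hsq, hmean]
  field_simp
  ring

lemma map_uniformCDF_increment_cond_Ioo {α b c : ℝ} (hα : 0 < α) (hb : 0 < b)
    (hc : c = 0 ∨ c = 1) :
    (volume[|Ioo 0 b]).map (fun x => uniformCDF b (α * c + x) - uniformCDF b (α * c + x - α))
      = (volume[|Ioo 0 b]).map (fun x => min x (min α b) / b) := by
  have hmem := ae_cond_mem (μ := volume) (measurableSet_Ioo (a := (0 : ℝ)) (b := b))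
  rcases hc with rfl | rfl
  · refine Measure.map_congr (hmem.mono fun x hx => ?_)
    simpa using uniformCDF_sub_uniformCDF_sub hα hb (Ioo_subset_Icc_self hx)
  · conv_rhs => rw [← map_const_sub_cond_Ioo b, Measure.map_map (by fun_prop) (by fun_prop)]
    refine Measure.map_congr (hmem.mono fun x hx => ?_)
    simpa using uniformCDF_add_sub_uniformCDF hα hb (Ioo_subset_Icc_self hx)

theorem stmt13_general {Ω : Type*} [MeasurableSpace Ω] (μ : Measure Ω) [IsProbabilityMeasure μ]
    (α b p : ℝ) (hα : 0 < α) (hb : 0 < b)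
    (X₁ X₂ : Ω → ℝ) (hX₁ : Measurable X₁) (hX₂ : Measurable X₂)
    (hBer : μ.map X₁ = ENNReal.ofReal p • Measure.dirac (1 : ℝ)
      + ENNReal.ofReal (1 - p) • Measure.dirac (0 : ℝ))
    (hUnif : μ.map X₂ = ProbabilityTheory.cond volume (Set.Ioo 0 b))
    (hindep : IndepFun X₁ X₂ μ)
    (Z : Ω → ℝ) (hZ : Z = fun ω => α * X₁ ω + X₂ ω)
    (F : ℝ → ℝ) (hF : ∀ x, F x = min (max (x / b) 0) 1) :
    variance (fun ω => F (Z ω) - F (Z ω - α)) μ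
      = if α ≤ b then (α / b) ^ 3 * (1 / 3 - α / (4 * b)) else 1 / 12 := by
  obtain rfl : F = uniformCDF b := funext hF
  subst hZ
  have : IsProbabilityMeasure (μ.map X₁) := Measure.isProbabilityMeasure_map hX₁.aemeasurable
  have hbinary : ∀ᵐ c ∂(μ.map X₁), c = 0 ∨ c = 1 := by
    rw [hBer, ae_add_measure_iff]
    exact ⟨Measure.ae_smul_measure (by simp) _, Measure.ae_smul_measure (by simp) _⟩
  have hlaw : μ.map (fun ω => uniformCDF b (α * X₁ ω + X₂ ω) - uniformCDF b (α * X₁ ω + X₂ ω - α))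
      = (volume[|Ioo 0 b]).map (fun x => min x (min α b) / b) := by
    let G : ℝ × ℝ → ℝ := fun q => uniformCDF b (α * q.1 + q.2) - uniformCDF b (α * q.1 + q.2 - α)
    change μ.map (G ∘ fun ω => (X₁ ω, X₂ ω)) = _
    rw [← Measure.map_map (by fun_prop) (by fun_prop),
      (indepFun_iff_map_prod_eq_prod_map_map hX₁.aemeasurable hX₂.aemeasurable).mp hindep, hUnif]
    exact Measure.map_prod_eq_of_ae_map_eq (by fun_prop)
      (hbinary.mono fun c hc => map_uniformCDF_increment_cond_Ioo hα hb hc)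
  rw [← variance_id_map (by fun_prop), hlaw, variance_id_map (by fun_prop),
    variance_min_div_cond_Ioo (le_min hα.le hb.le) (min_le_right _ _) hb]
  split_ifs with h
  · rw [min_eq_left h]
  · rw [min_eq_right (not_le.mp h).le, div_self hb.ne']
    field_simp
    norm_num

/-- Let `α > 0`, `b > 0`, `X₁ ~ Bernoulli(p)` with `0 ≤ p ≤ 1`, `X₂`
uniform on `(0,b)` independent of `X₁`, `Z = αX₁ + X₂`, and `F(x) = min(max(x/b,0),1)`
the CDF of `X₂`.  Then `Var(F(Z) - F(Z-α)) = (α/b)³(1/3 - α/(4b))` if `α ≤ b`, and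
`Var(F(Z) - F(Z-α)) = 1/12` if `α > b`. -/
theorem stmt13 {Ω : Type*} [MeasurableSpace Ω] (μ : Measure Ω) [IsProbabilityMeasure μ]
    (α b p : ℝ) (hα : 0 < α) (hb : 0 < b) (hp0 : 0 ≤ p) (hp1 : p ≤ 1)
    (X₁ X₂ : Ω → ℝ) (hX₁ : Measurable X₁) (hX₂ : Measurable X₂)
    (hBer : μ.map X₁ = ENNReal.ofReal p • Measure.dirac (1 : ℝ)
      + ENNReal.ofReal (1 - p) • Measure.dirac (0 : ℝ))
    (hUnif : μ.map X₂ = ProbabilityTheory.cond volume (Set.Ioo 0 b))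
    (hindep : IndepFun X₁ X₂ μ)
    (Z : Ω → ℝ) (hZ : Z = fun ω => α * X₁ ω + X₂ ω)
    (F : ℝ → ℝ) (hF : ∀ x, F x = min (max (x / b) 0) 1) :
    variance (fun ω => F (Z ω) - F (Z ω - α)) μ
      = if α ≤ b then (α / b) ^ 3 * (1 / 3 - α / (4 * b)) else 1 / 12 :=
  stmt13_general μ α b p hα hb X₁ X₂ hX₁ hX₂ hBer hUnif hindep Z hZ F hF
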